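/- arXiv:1503.09175 — 2 statements merged into one kernel-verified Lean document; each statement's English description precedes it below -/
import Mathlib

section
/- Suppose the hypercube Q(n) (n ≥ 2k+1) contains a cycle C visiting all C(n,k) vertices in level k and staying within levels k and k+1, and a family of C(n,k) vertex-disjoint monotone paths each starting at a vertex of C in level k+1 and ending in level n-k. Write C = (x_1, x_2, ..., x_{2N}) with N = C(n,k), where the odd-indexed vertices lie in level k and the even-indexed ones in level k+1, and let y_{2i} be the endpoint in level n-k of the path starting at x_{2i}. Then the cyclic sequence (x_1, y_2, x_3, y_4, ..., x_{2N-1}, y_{2N}), interpreting bitstrings as characteristic vectors of subsets of [n], is a Hamilton cycle in the bipartite Kneser graph H(n,k). -/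
open SimpleGraph

/-- The bipartite Kneser graph `H(n,k)`: vertices are the `k`-element and
`(n-k)`-element subsets of `[n]`, with an edge when one is a (proper) subset of the other. -/
def bipKneser (n k : ℕ) : SimpleGraph {s : Finset (Fin n) // s.card = k ∨ s.card = n - k} where
  Adj s t := s.1 ⊂ t.1 ∨ t.1 ⊂ s.1
  symm := by constructor; intro s t h; tauto
  loopless := by constructor; intro s h; rcases h with h | h <;> exact ssubset_irrefl _ h

/-- The Kneser graph `K(n,k)`: vertices are the `k`-element subsets of `[n]`,
with an edge between any two disjoint sets. -/
def kneser (n k : ℕ) : SimpleGraph {s : Finset (Fin n) // s.card = k} where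
  Adj s t := s ≠ t ∧ Disjoint s.1 t.1
  symm := by constructor; intro s t h; exact ⟨h.1.symm, h.2.symm⟩
  loopless := by constructor; intro s h; exact h.1 rfl

/-- The hypercube `Q(n)`: vertices are bitstrings of length `n`, with an edge
between two bitstrings differing in exactly one bit. -/
def hypercube (n : ℕ) : SimpleGraph (Fin n → Bool) where
  Adj x y := hammingDist x y = 1
  symm := by constructor; intro x y h; rwa [hammingDist_comm]
  loopless := by constructor; intro x h; simp [hammingDist_self] at h

/-- The level of a bitstring: its number of `1`-entries. -/
def level {n : ℕ} (x : Fin n → Bool) : ℕ := (Finset.univ.filter (fun i => x i = true)).card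

/-- The subset of `[n]` whose characteristic vector is the bitstring `x`. -/
def toSet {n : ℕ} (x : Fin n → Bool) : Finset (Fin n) := Finset.univ.filter (fun i => x i = true)

/-! Interleave the level-`k` sets `x i` with the endpoints `y i` along `ZMod (2 * N)`. Both `x i`
and `x (i + 1)` lie one step below `x' i` in `Q(n)`, and `x' i ⊆ y i` because a walk in `Q(n)`
visiting each level at most once is a chain of sets; as `k < n - k` all these inclusions are
proper, which gives the edges of `H(n,k)`. The `x i` are distinct, the `y i` are distinct as
endpoints of disjoint paths, the two kinds differ in size, and `H(n,k)` has exactly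
`2 * C(n,k)` vertices, so the cyclic sequence is a bijection onto them. -/

open scoped Finset symmDiff

section Interleave

variable {α : Type*} {N : ℕ}

def interleave (f g : ZMod N → α) (j : ZMod (2 * N)) : α :=
  if j.val % 2 = 0 then f (j.val / 2 : ℕ) else g (j.val / 2 : ℕ)

lemma interleave_natCast (f g : ZMod N → α) {m : ℕ} (hm : m < 2 * N) :
    interleave f g m = if m % 2 = 0 then f (m / 2 : ℕ) else g (m / 2 : ℕ) := by
  rw [interleave, ZMod.val_natCast_of_lt hm]

variable [NeZero N]

lemma interleave_two_mul (f g : ZMod N → α) (i : ZMod N) :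
    interleave f g (2 * i.val) = f i := by
  have h := interleave_natCast f g (m := 2 * i.val) (by have := i.val_lt; omega)
  push_cast at h
  rw [h, if_pos (by omega), Nat.mul_div_cancel_left _ two_pos, ZMod.natCast_zmod_val]

lemma interleave_two_mul_add_one (f g : ZMod N → α) (i : ZMod N) :
    interleave f g (2 * i.val + 1) = g i := by
  have h := interleave_natCast f g (m := 2 * i.val + 1) (by have := i.val_lt; omega)
  push_cast at h
  rw [h, if_neg (by omega), (by omega : (2 * i.val + 1) / 2 = i.val), ZMod.natCast_zmod_val]

lemma ZMod.exists_eq_two_mul_val_or_eq_two_mul_val_add_one (j : ZMod (2 * N)) :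
    ∃ i : ZMod N, j = 2 * i.val ∨ j = 2 * i.val + 1 := by
  refine ⟨(j.val / 2 : ℕ), ?_⟩
  rw [ZMod.val_natCast_of_lt (by have := j.val_lt; omega)]
  rcases Nat.mod_two_eq_zero_or_one j.val with h | h
  · left
    conv_lhs => rw [← ZMod.natCast_zmod_val j]
    exact_mod_cast congrArg Nat.cast (by omega : j.val = 2 * (j.val / 2))
  · right
    conv_lhs => rw [← ZMod.natCast_zmod_val j]
    exact_mod_cast congrArg Nat.cast (by omega : j.val = 2 * (j.val / 2) + 1)

lemma ZMod.two_mul_val_add_one (i : ZMod N) :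
    (2 * (i + 1).val : ZMod (2 * N)) = 2 * i.val + 1 + 1 := by
  have h : (i + 1).val ≡ i.val + 1 [MOD N] := by
    rw [← ZMod.natCast_eq_natCast_iff]
    simp
  have h2 := (ZMod.natCast_eq_natCast_iff _ _ _).mpr (h.mul_left' 2)
  push_cast at h2
  rw [h2]
  ring

lemma interleave_injective {f g : ZMod N → α} (hf : Function.Injective f)
    (hg : Function.Injective g) (hfg : ∀ i j, f i ≠ g j) :
    Function.Injective (interleave f g) := by
  intro j₁ j₂ h
  obtain ⟨i₁, rfl | rfl⟩ := ZMod.exists_eq_two_mul_val_or_eq_two_mul_val_add_one j₁ <;>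
  obtain ⟨i₂, rfl | rfl⟩ := ZMod.exists_eq_two_mul_val_or_eq_two_mul_val_add_one j₂ <;>
  simp only [interleave_two_mul, interleave_two_mul_add_one] at h
  · rw [hf h]
  · exact absurd h (hfg _ _)
  · exact absurd h.symm (hfg _ _)
  · rw [hg h]

lemma interleave_rel {r : α → α → Prop} {f g : ZMod N → α} (hfg : ∀ i, r (f i) (g i))
    (hgf : ∀ i, r (g i) (f (i + 1))) (j : ZMod (2 * N)) :
    r (interleave f g j) (interleave f g (j + 1)) := by
  obtain ⟨i, rfl | rfl⟩ := ZMod.exists_eq_two_mul_val_or_eq_two_mul_val_add_one j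
  · rw [interleave_two_mul, interleave_two_mul_add_one]
    exact hfg i
  · rw [← ZMod.two_mul_val_add_one, interleave_two_mul_add_one, interleave_two_mul]
    exact hgf i

end Interleave

namespace Finset

lemma covBy_or_covBy_of_card_symmDiff_eq_one {β : Type*} [DecidableEq β] {s t : Finset β}
    (h : #(s ∆ t) = 1) : s ⋖ t ∨ t ⋖ s := by
  rw [Finset.symmDiff_def, card_union_of_disjoint disjoint_sdiff_sdiff] at h
  rcases Nat.add_eq_one_iff.mp h with ⟨h₀, h₁⟩ | ⟨h₁, h₀⟩
  · rw [card_eq_zero, sdiff_eq_empty_iff_subset] at h₀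
    exact .inl (covBy_iff_card_sdiff_eq_one.mpr ⟨h₀, h₁⟩)
  · rw [card_eq_zero, sdiff_eq_empty_iff_subset] at h₀
    exact .inr (covBy_iff_card_sdiff_eq_one.mpr ⟨h₀, h₁⟩)

end Finset

lemma card_bipKneser_vertices {n k : ℕ} (hk : k ≤ n) (hkn : n ≠ 2 * k) :
    Fintype.card {s : Finset (Fin n) // #s = k ∨ #s = n - k} = 2 * n.choose k := by
  rw [Fintype.card_subtype_or_disjoint, Fintype.card_finset_len, Fintype.card_finset_len,
    Fintype.card_fin, Nat.choose_symm hk, two_mul]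
  intro r hrk hrnk s hs
  have := hrk s hs
  have := hrnk s hs
  simp only [Pi.bot_apply]
  omega

lemma SimpleGraph.Walk.exists_mem_support_eq_of_le {V : Type*} {G : SimpleGraph V} {f : V → ℕ}
    (hf : ∀ u v, G.Adj u v → f v ≤ f u + 1) {a b : V} (q : G.Walk a b) {u v : V}
    (hu : u ∈ q.support) (hv : v ∈ q.support) {m : ℕ} (hum : f u ≤ m) (hmv : m ≤ f v) :
    ∃ w ∈ q.support, f w = m := by
  induction q generalizing u v with
  | nil =>
    simp only [Walk.support_nil, List.mem_singleton] at hu hv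
    rw [hu] at hum
    rw [hv] at hmv
    exact ⟨_, List.mem_singleton_self _, by omega⟩
  | @cons a c b h q ih =>
    simp only [Walk.support_cons, List.mem_cons] at hu hv ⊢
    have lift : (∃ w ∈ q.support, f w = m) → ∃ w, (w = a ∨ w ∈ q.support) ∧ f w = m :=
      fun ⟨w, hw, hwm⟩ => ⟨w, .inr hw, hwm⟩
    rcases hu with hu | hu <;> rcases hv with hv | hv
    · subst u v
      exact ⟨a, .inl rfl, by omega⟩
    · subst u
      by_cases hm : f a = m
      · exact ⟨a, .inl rfl, hm⟩
      · exact lift (ih q.start_mem_support hv (by have := hf _ _ h; omega) hmv)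
    · subst v
      by_cases hm : f a = m
      · exact ⟨a, .inl rfl, hm⟩
      · exact lift (ih hu q.start_mem_support hum (by have := hf _ _ h.symm; omega))
    · exact lift (ih hu hv hum hmv)

section Hypercube

variable {n : ℕ}

lemma toSet_injective : Function.Injective (toSet (n := n)) := by
  intro u v h
  funext i
  have hi := congrArg (i ∈ ·) h
  simp only [toSet, Finset.mem_filter, Finset.mem_univ, true_and, eq_iff_iff] at hi
  exact Bool.eq_iff_iff.mpr hi

lemma hammingDist_eq_card_symmDiff (a c : Fin n → Bool) :
    hammingDist a c = #(toSet a ∆ toSet c) := by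
  unfold hammingDist
  congr 1
  ext i
  cases ha : a i <;> cases hc : c i <;> simp [toSet, Finset.mem_symmDiff, ha, hc]

lemma toSet_covBy_or_covBy_of_adj {a c : Fin n → Bool} (h : (hypercube n).Adj a c) :
    toSet a ⋖ toSet c ∨ toSet c ⋖ toSet a :=
  Finset.covBy_or_covBy_of_card_symmDiff_eq_one ((hammingDist_eq_card_symmDiff a c).symm.trans h)

lemma level_eq_add_one_of_covBy {a c : Fin n → Bool} (h : toSet a ⋖ toSet c) :
    level c = level a + 1 :=
  (Nat.covBy_iff_add_one_eq.mp h.card_finset).symm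

lemma level_le_add_one_of_adj {a c : Fin n → Bool} (h : (hypercube n).Adj a c) :
    level c ≤ level a + 1 := by
  rcases toSet_covBy_or_covBy_of_adj h with h | h
  · exact (level_eq_add_one_of_covBy h).le
  · have := level_eq_add_one_of_covBy h
    omega

lemma toSet_subset_of_adj_of_level_le {a c : Fin n → Bool} (h : (hypercube n).Adj a c)
    (hl : level a ≤ level c) : toSet a ⊆ toSet c := by
  rcases toSet_covBy_or_covBy_of_adj h with h | h
  · exact h.le
  · have := level_eq_add_one_of_covBy h
    omega

/-- If the walk ever stepped down from `a` and later climbed back above `level a`, the discrete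
intermediate value theorem would make it revisit `level a`. -/
lemma toSet_subset_of_mem_support_of_level_le {a b : Fin n → Bool} (q : (hypercube n).Walk a b)
    (hq : Set.InjOn level {w | w ∈ q.support}) {u v : Fin n → Bool}
    (hu : u ∈ q.support) (hv : v ∈ q.support) (huv : level u ≤ level v) :
    toSet u ⊆ toSet v := by
  induction q generalizing u v with
  | nil =>
    simp only [Walk.support_nil, List.mem_singleton] at hu hv
    rw [hu, hv]
  | @cons a c b h q ih =>
    replace ih := @ih (hq.mono fun _ => List.mem_cons_of_mem a)
    have ha_mem : a ∈ (Walk.cons h q).support := q.support.mem_cons_self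
    simp only [Walk.support_cons, List.mem_cons] at hu hv
    have hstep : ∀ u v, (hypercube n).Adj u v → level v ≤ level u + 1 :=
      fun _ _ => level_le_add_one_of_adj
    by_cases ha : a ∈ q.support
    · exact ih (hu.elim (· ▸ ha) id) (hv.elim (· ▸ ha) id) huv
    rcases hu with hu | hu <;> rcases hv with hv | hv
    · rw [hu, hv]
    · subst u
      rcases toSet_covBy_or_covBy_of_adj h with hac | hca
      · have := level_eq_add_one_of_covBy hac
        obtain heq | hlt := huv.eq_or_lt
        · exact absurd (hq ha_mem (List.mem_cons_of_mem a hv) heq ▸ hv) ha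
        · exact hac.le.trans (ih q.start_mem_support hv (by omega))
      · have := level_eq_add_one_of_covBy hca
        obtain ⟨w, hw, hwu⟩ :=
          q.exists_mem_support_eq_of_le hstep q.start_mem_support hv (by omega) huv
        exact absurd (hq (List.mem_cons_of_mem a hw) ha_mem hwu ▸ hw) ha
    · subst v
      rcases toSet_covBy_or_covBy_of_adj h with hac | hca
      · have := level_eq_add_one_of_covBy hac
        obtain ⟨w, hw, hwv⟩ :=
          q.exists_mem_support_eq_of_le hstep hu q.start_mem_support huv (by omega)
        exact absurd (hq (List.mem_cons_of_mem a hw) ha_mem hwv ▸ hw) ha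
      · have := level_eq_add_one_of_covBy hca
        obtain heq | hlt := huv.eq_or_lt
        · exact absurd (hq (List.mem_cons_of_mem a hu) ha_mem heq ▸ hu) ha
        · exact (ih hu q.start_mem_support (by omega)).trans hca.le
    · exact ih hu hv huv

end Hypercube

theorem stmt_11_general (n k : ℕ) (hn : 2 * k + 1 ≤ n)
    (N : ℕ) (hN : N = n.choose k)
    (x x' : ZMod N → (Fin n → Bool))
    (hadj : ∀ i, (hypercube n).Adj (x i) (x' i) ∧ (hypercube n).Adj (x' i) (x (i + 1)))
    (hlevx : ∀ i, level (x i) = k) (hlevx' : ∀ i, level (x' i) = k + 1)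
    (hxinj : Function.Injective x)
    (y : ZMod N → (Fin n → Bool)) (hlevy : ∀ i, level (y i) = n - k)
    (p : ∀ i, (hypercube n).Walk (x' i) (y i))
    (hmono : ∀ i, ∀ w₁ ∈ (p i).support, ∀ w₂ ∈ (p i).support, level w₁ = level w₂ → w₁ = w₂)
    (hdisj : ∀ i j, i ≠ j → ∀ v, v ∈ (p i).support → v ∉ (p j).support) :
    ∃ w : ZMod (2 * N) → {s : Finset (Fin n) // s.card = k ∨ s.card = n - k},
      Function.Bijective w ∧
      (∀ i, (bipKneser n k).Adj (w i) (w (i + 1))) ∧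
      (∀ i : ZMod N, (w (2 * i.val) : Finset (Fin n)) = toSet (x i) ∧
        (w (2 * i.val + 1) : Finset (Fin n)) = toSet (y i)) := by
  have : NeZero N := ⟨hN ▸ (Nat.choose_pos (by omega)).ne'⟩
  have hx'y (i : ZMod N) : toSet (x' i) ⊆ toSet (y i) :=
    toSet_subset_of_mem_support_of_level_le (p i) (hmono i) (p i).start_mem_support
      (p i).end_mem_support (by rw [hlevx', hlevy]; omega)
  have hxx' (i : ZMod N) : toSet (x i) ⊆ toSet (x' i) :=
    toSet_subset_of_adj_of_level_le (hadj i).1 (by rw [hlevx, hlevx']; omega)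
  have hx'x (i : ZMod N) : toSet (x (i + 1)) ⊆ toSet (x' i) :=
    toSet_subset_of_adj_of_level_le (hadj i).2.symm (by rw [hlevx, hlevx']; omega)
  have hxy (i j : ZMod N) (h : toSet (x i) ⊆ toSet (y j)) : toSet (x i) ⊂ toSet (y j) :=
    h.ssubset_of_ne fun he => by
      have : level (x i) = level (y j) := congrArg Finset.card he
      rw [hlevx, hlevy] at this
      omega
  have hyinj : Function.Injective y := fun i j hij => by_contra fun hne =>
    hdisj i j hne (y i) (p i).end_mem_support (by rw [hij]; exact (p j).end_mem_support)
  let X (i : ZMod N) : {s : Finset (Fin n) // s.card = k ∨ s.card = n - k} :=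
    ⟨toSet (x i), .inl (hlevx i)⟩
  let Y (i : ZMod N) : {s : Finset (Fin n) // s.card = k ∨ s.card = n - k} :=
    ⟨toSet (y i), .inr (hlevy i)⟩
  have hXY (i j : ZMod N) : X i ≠ Y j := fun he => by
    have : level (x i) = level (y j) := congrArg (Finset.card ∘ Subtype.val) he
    rw [hlevx, hlevy] at this
    omega
  refine ⟨interleave X Y, ?_, interleave_rel (r := (bipKneser n k).Adj) ?_ ?_, fun i =>
    ⟨congrArg Subtype.val (interleave_two_mul X Y i),
      congrArg Subtype.val (interleave_two_mul_add_one X Y i)⟩⟩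
  · refine (Fintype.bijective_iff_injective_and_card _).mpr ⟨?_, ?_⟩
    · exact interleave_injective (fun i j h => hxinj (toSet_injective (congrArg Subtype.val h)))
        (fun i j h => hyinj (toSet_injective (congrArg Subtype.val h))) hXY
    · rw [ZMod.card, card_bipKneser_vertices (by omega) (by omega), hN]
  · exact fun i => .inl (hxy i i ((hxx' i).trans (hx'y i)))
  · exact fun i => .inr (hxy (i + 1) i ((hx'x i).trans (hx'y i)))

/-- Given a cycle `(x_1, x'_1, x_2, x'_2, …, x_N, x'_N)` in `Q(n)` within levels `k` and
`k+1` visiting all `N = C(n,k)` vertices in level `k`, and `N` vertex-disjoint monotone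
paths, the path starting at `x'_i` ending at the level-`(n-k)` vertex `y_i`, the cyclic
sequence `(x_1, y_1, x_2, y_2, …, x_N, y_N)`, with bitstrings read as characteristic
vectors of subsets of `[n]`, is a Hamilton cycle in the bipartite Kneser graph `H(n,k)`. -/
theorem stmt_11 (n k : ℕ) (hk : 1 ≤ k) (hn : 2 * k + 1 ≤ n)
    (N : ℕ) (hN : N = n.choose k)
    (x x' : ZMod N → (Fin n → Bool))
    (hadj : ∀ i, (hypercube n).Adj (x i) (x' i) ∧ (hypercube n).Adj (x' i) (x (i + 1)))
    (hlevx : ∀ i, level (x i) = k) (hlevx' : ∀ i, level (x' i) = k + 1)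
    (hxinj : Function.Injective x) (hx'inj : Function.Injective x')
    (hxall : ∀ v : Fin n → Bool, level v = k → ∃ i, x i = v)
    (y : ZMod N → (Fin n → Bool)) (hlevy : ∀ i, level (y i) = n - k)
    (p : ∀ i, (hypercube n).Walk (x' i) (y i))
    (hpath : ∀ i, (p i).IsPath)
    (hmono : ∀ i, ∀ w₁ ∈ (p i).support, ∀ w₂ ∈ (p i).support, level w₁ = level w₂ → w₁ = w₂)
    (hdisj : ∀ i j, i ≠ j → ∀ v, v ∈ (p i).support → v ∉ (p j).support) :
    ∃ w : ZMod (2 * N) → {s : Finset (Fin n) // s.card = k ∨ s.card = n - k},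
      Function.Bijective w ∧
      (∀ i, (bipKneser n k).Adj (w i) (w (i + 1))) ∧
      (∀ i : ZMod N, (w (2 * i.val) : Finset (Fin n)) = toSet (x i) ∧
        (w (2 * i.val + 1) : Finset (Fin n)) = toSet (y i)) :=
  stmt_11_general n k hn N hN x x' hadj hlevx hlevx' hxinj y hlevy p hmono hdisj
end

section
/- For n ≥ 4, the n monotone paths σ^ℓ(A(n,1)), ℓ = 0, 1, ..., n-1, where A(n,1) = (a(n,2), a(n,3), ..., a(n,n-1)) and σ^ℓ is cyclic left shift by ℓ, are pairwise vertex-disjoint paths in the hypercube Q(n): every vertex visited by any of these paths has its 1-entries appearing consecutively when the bitstring is viewed cyclically, and distinct shifts ℓ produce disjoint vertex sets. -/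
open SimpleGraph

/-- `a(n,k)`: the bitstring of length `n` with `1`s exactly in the last `k` positions. -/
def abit (n k : ℕ) : Fin n → Bool := fun i => decide (n - k ≤ i.val)

/-- `b(n,k) = a(n-1,k)∘0`: the bitstring of length `n` with `1`s exactly in positions
`n-1-k, …, n-2`. -/
def bbit (n k : ℕ) : Fin n → Bool := fun i => decide (n - 1 - k ≤ i.val ∧ i.val < n - 1)

/-- `σ^ℓ`: cyclic left shift of a bitstring by `ℓ` positions. -/
def cycShift (n ℓ : ℕ) (x : Fin n → Bool) : Fin n → Bool :=
  fun i => x ⟨(i.val + ℓ) % n, Nat.mod_lt _ (Nat.lt_of_le_of_lt (Nat.zero_le _) i.isLt)⟩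

/-!
The shift `σ^ℓ` is precomposition with the rotation `i ↦ i + ℓ` of `Fin n`, a bijection, so it
preserves levels and Hamming distances and maps cyclic intervals to cyclic intervals; `a(n,j)` is
the interval `[n - j, n)`, which settles adjacency, levels and consecutiveness. For disjointness,
equal vertices lie on the same level `j`, and the start of the interval (the unique `1` preceded by
a `0`, which exists as `0 < j < n`) recovers `ℓ` modulo `n`.
-/
section
variable {n : ℕ}

lemma abit_eq_true_iff (j : ℕ) (v : Fin n) : abit n j v = true ↔ n - j ≤ v.val :=
  decide_eq_true_iff

lemma level_abit {j : ℕ} (hj : j ≤ n) : level (abit n j) = j := by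
  have h : (Finset.univ.filter fun i : Fin n => abit n j i = true).map Fin.valEmbedding =
      Finset.Ico (n - j) n := by
    ext v
    simp only [Finset.mem_map, Finset.mem_filter, Finset.mem_univ, true_and, abit_eq_true_iff,
      Fin.valEmbedding_apply, Finset.mem_Ico]
    exact ⟨fun ⟨i, hi, hv⟩ => hv ▸ ⟨hi, i.isLt⟩, fun ⟨hv, hvn⟩ => ⟨⟨v, hvn⟩, hv, rfl⟩⟩
  rw [level, ← Finset.card_map, h, Nat.card_Ico]
  omega

lemma hammingDist_abit_succ {j : ℕ} (hj : j < n) :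
    hammingDist (abit n j) (abit n (j + 1)) = 1 := by
  rw [hammingDist, Finset.card_eq_one]
  refine ⟨⟨n - (j + 1), by omega⟩, ?_⟩
  ext v
  simp only [Finset.mem_filter, Finset.mem_univ, true_and, Finset.mem_singleton, ne_eq,
    Fin.ext_iff, abit, decide_eq_decide]
  omega

open Fin.NatCast

variable [NeZero n]

lemma cycShift_apply (ℓ : ℕ) (x : Fin n → Bool) (i : Fin n) : cycShift n ℓ x i = x (i + ℓ) := by
  simp only [cycShift]
  congr 1
  ext
  simp [Fin.val_add]

lemma level_cycShift (ℓ : ℕ) (x : Fin n → Bool) : level (cycShift n ℓ x) = level x :=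
  Finset.card_equiv (Equiv.addRight (ℓ : Fin n)) (by simp [cycShift_apply])

lemma hammingDist_cycShift (ℓ : ℕ) (x y : Fin n → Bool) :
    hammingDist (cycShift n ℓ x) (cycShift n ℓ y) = hammingDist x y :=
  Finset.card_equiv (Equiv.addRight (ℓ : Fin n)) (by simp [cycShift_apply])

lemma val_add_natCast (s : Fin n) (t : ℕ) : (s + t : Fin n).val = (s.val + t) % n := by
  simp [Fin.val_add]

lemma abit_eq_true_iff_exists {j : ℕ} (hj : j ≤ n) (v : Fin n) :
    abit n j v = true ↔ ∃ t < j, v = ((n - j : ℕ) : Fin n) + t := by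
  have hval : ∀ t < j, (((n - j : ℕ) : Fin n) + t).val = n - j + t := fun t ht => by
    rw [val_add_natCast, Fin.val_natCast, Nat.mod_add_mod, Nat.mod_eq_of_lt (by omega)]
  rw [abit_eq_true_iff]
  constructor
  · intro hv
    exact ⟨v.val - (n - j), by omega, Fin.ext (by rw [hval _ (by omega)]; omega)⟩
  · rintro ⟨t, ht, rfl⟩
    rw [hval t ht]
    omega

lemma cycShift_abit_eq_true_iff {j : ℕ} (hj : j ≤ n) (ℓ : ℕ) (i : Fin n) :
    cycShift n ℓ (abit n j) i = true ↔
      ∃ t < j, i.val = ((((n - j : ℕ) : Fin n) - ℓ).val + t) % n := by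
  simp only [cycShift_apply, abit_eq_true_iff_exists hj, ← val_add_natCast, ← Fin.ext_iff,
    sub_add_eq_add_sub, eq_sub_iff_add_eq]

lemma abit_eq_true_and_abit_sub_one_eq_false_iff {j : ℕ} (hj₀ : 0 < j) (hj : j < n)
    (v : Fin n) :
    abit n j v = true ∧ abit n j (v - 1) = false ↔ v = ((n - j : ℕ) : Fin n) := by
  have hone : ((1 : Fin n) : ℕ) = 1 := by rw [Fin.val_one', Nat.mod_eq_of_lt (by omega)]
  have hpred : ∀ u : Fin n, 1 ≤ u.val → (u - 1).val = u.val - 1 := fun u hu => by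
    rw [Fin.sub_val_of_le (by rwa [Fin.le_def, hone]), hone]
  simp only [← Bool.not_eq_true, abit_eq_true_iff, Fin.ext_iff, Fin.val_natCast,
    Nat.mod_eq_of_lt (show n - j < n by omega)]
  constructor
  · rintro ⟨hv, hv'⟩
    rw [hpred v (by omega)] at hv'
    omega
  · intro hv
    rw [hpred v (by omega)]
    omega

lemma natCast_eq_of_cycShift_abit_eq {j ℓ₁ ℓ₂ : ℕ} (hj₀ : 0 < j) (hj : j < n)
    (h : cycShift n ℓ₁ (abit n j) = cycShift n ℓ₂ (abit n j)) : (ℓ₁ : Fin n) = ℓ₂ := by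
  have hshift (i : Fin n) : abit n j (i + ℓ₁) = abit n j (i + ℓ₂) := by
    simpa only [cycShift_apply] using congrFun h i
  set p : Fin n := ((n - j : ℕ) : Fin n)
  obtain ⟨hp, hp'⟩ := (abit_eq_true_and_abit_sub_one_eq_false_iff hj₀ hj p).2 rfl
  have hq : p - ℓ₁ + ℓ₂ = p := by
    refine (abit_eq_true_and_abit_sub_one_eq_false_iff hj₀ hj _).1 ⟨?_, ?_⟩
    · rw [← hshift, sub_add_cancel, hp]
    · rw [show p - ℓ₁ + ℓ₂ - 1 = p - 1 - ℓ₁ + ℓ₂ by abel, ← hshift, sub_add_cancel, hp']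
  rw [sub_add_eq_add_sub, sub_eq_iff_eq_add, add_left_cancel_iff] at hq
  exact hq.symm

end

/-- For `n ≥ 4`, the `n` monotone paths `σ^ℓ(A(n,1))`, `ℓ = 0,…,n-1`, where
`A(n,1) = (a(n,2), …, a(n,n-1))`, are pairwise vertex-disjoint paths in `Q(n)`: each
consecutive pair along a shifted path is adjacent, every visited vertex has level equal to
its position `j` (so each path is monotone) and its `1`-entries cyclically consecutive,
and distinct shifts produce disjoint vertex sets. -/
theorem stmt_17 (n : ℕ) (hn : 4 ≤ n) :
    (∀ ℓ j, 2 ≤ j → j ≤ n - 2 →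
      (hypercube n).Adj (cycShift n ℓ (abit n j)) (cycShift n ℓ (abit n (j + 1)))) ∧
    (∀ ℓ j, 2 ≤ j → j ≤ n - 1 → level (cycShift n ℓ (abit n j)) = j) ∧
    (∀ ℓ j, 2 ≤ j → j ≤ n - 1 → ∃ s, ∀ i : Fin n,
      (cycShift n ℓ (abit n j) i = true ↔ ∃ t < j, i.val = (s + t) % n)) ∧
    (∀ ℓ₁ ℓ₂, ℓ₁ < n → ℓ₂ < n → ℓ₁ ≠ ℓ₂ → ∀ j₁ j₂, 2 ≤ j₁ → j₁ ≤ n - 1 → 2 ≤ j₂ →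
      j₂ ≤ n - 1 → cycShift n ℓ₁ (abit n j₁) ≠ cycShift n ℓ₂ (abit n j₂)) := by
  have : NeZero n := ⟨by omega⟩
  refine ⟨fun ℓ j _ hj => ?_, fun ℓ j _ hj => ?_, fun ℓ j _ hj => ?_, ?_⟩
  · change hammingDist _ _ = 1
    rw [hammingDist_cycShift, hammingDist_abit_succ (by omega)]
  · rw [level_cycShift, level_abit (by omega)]
  · exact ⟨_, cycShift_abit_eq_true_iff (by omega) ℓ⟩
  · intro ℓ₁ ℓ₂ hℓ₁ hℓ₂ hne j₁ j₂ hj₁ hj₁' _ hj₂' h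
    have hj : j₁ = j₂ := by
      have hlevel := congrArg level h
      rwa [level_cycShift, level_cycShift, level_abit (by omega), level_abit (by omega)] at hlevel
    subst hj
    have hcast := congrArg Fin.val (natCast_eq_of_cycShift_abit_eq (by omega) (by omega) h)
    rw [Fin.val_natCast, Fin.val_natCast, Nat.mod_eq_of_lt hℓ₁, Nat.mod_eq_of_lt hℓ₂] at hcast
    exact hne hcast
end
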